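/- arXiv:2403.16755 — 8 statements merged into one kernel-verified Lean document; each statement's English description precedes it below -/
import Mathlib

section
/- The 2×2 symmetric matrix Γ with entries Γ₁₁ = −4β_m(x_b + ε)/(x_a + x_b + ε)^3, Γ₂₂ = −4β_m(x_a + ε)/(x_a + x_b + ε)^3, and Γ₁₂ = Γ₂₁ = −2β_m ε/(x_a + x_b + ε)^3 is negative definite for all x_a, x_b ≥ 0, whenever β_m > 0 and ε > 0. -/
/-!
Up to the positive factor `2 βm / (xa + xb + ε) ^ 3`, `-Γ` is `!![2 (xb + ε), ε; ε, 2 (xa + ε)]`,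
whose diagonal is positive and whose determinant `4 (xa + ε) (xb + ε) - ε ^ 2` is at least
`3 ε ^ 2 > 0`; a symmetric `2 × 2` matrix with these two properties is positive definite.
-/

open Matrix

lemma Matrix.posDef_fin_two_of_pos_of_sq_lt {a b d : ℝ} (ha : 0 < a) (hdet : b ^ 2 < a * d) :
    (!![a, b; b, d] : Matrix (Fin 2) (Fin 2) ℝ).PosDef := by
  refine .of_dotProduct_mulVec_pos ?_ fun v hv ↦ ?_
  · ext i j
    fin_cases i <;> fin_cases j <;> rfl
  · simp only [star_trivial, dotProduct, mulVec, Fin.sum_univ_two, of_apply, cons_val',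
      cons_val_zero, cons_val_one, empty_val', cons_val_fin_one]
    set x := v 0
    set y := v 1
    have hsq : a * (x * (a * x + b * y) + y * (b * x + d * y)) =
        (a * x + b * y) ^ 2 + (a * d - b ^ 2) * y ^ 2 := by ring
    have hform : 0 < (a * x + b * y) ^ 2 + (a * d - b ^ 2) * y ^ 2 := by
      by_cases hy : y = 0
      · have hx : x ≠ 0 := fun hx ↦ hv (by ext i; fin_cases i <;> assumption)
        simpa [hy] using sq_pos_of_ne_zero (mul_ne_zero ha.ne' hx)
      · exact add_pos_of_nonneg_of_pos (sq_nonneg _)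
          (mul_pos (sub_pos.2 hdet) (sq_pos_of_ne_zero hy))
    exact pos_of_mul_pos_right (hsq ▸ hform) ha.le

theorem stmt_1 (βm ε xa xb : ℝ) (hβm : 0 < βm) (hε : 0 < ε)
    (hxa : 0 ≤ xa) (hxb : 0 ≤ xb) :
    (-(!![-4 * βm * (xb + ε) / (xa + xb + ε) ^ 3,
          -2 * βm * ε / (xa + xb + ε) ^ 3;
          -2 * βm * ε / (xa + xb + ε) ^ 3,
          -4 * βm * (xa + ε) / (xa + xb + ε) ^ 3] : Matrix (Fin 2) (Fin 2) ℝ)).PosDef := by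
  have hs : 0 < xa + xb + ε := by linarith
  have hscale : -(!![-4 * βm * (xb + ε) / (xa + xb + ε) ^ 3,
          -2 * βm * ε / (xa + xb + ε) ^ 3;
          -2 * βm * ε / (xa + xb + ε) ^ 3,
          -4 * βm * (xa + ε) / (xa + xb + ε) ^ 3] : Matrix (Fin 2) (Fin 2) ℝ) =
      (2 * βm / (xa + xb + ε) ^ 3) • !![2 * (xb + ε), ε; ε, 2 * (xa + ε)] := by
    ext i j
    fin_cases i <;> fin_cases j <;> simp <;> ring
  rw [hscale]
  refine .smul (posDef_fin_two_of_pos_of_sq_lt (by linarith) ?_) (by positivity)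
  nlinarith [mul_nonneg hxa hxb]
end

section
/- The Schur complement of the (1,1) entry in the matrix Γ of the previous context equals −β_m·(4x_a + ε(4 − ε/(ε + x_b)))/(x_a + x_b + ε)^3, and this quantity is strictly negative for all x_a, x_b ≥ 0 when β_m > 0 and ε > 0. -/
theorem stmt_2 (βm ε xa xb : ℝ) (hβm : 0 < βm) (hε : 0 < ε)
    (hxa : 0 ≤ xa) (hxb : 0 ≤ xb) :
    (-4 * βm * (xa + ε) / (xa + xb + ε) ^ 3) -
      (-2 * βm * ε / (xa + xb + ε) ^ 3) ^ 2 / (-4 * βm * (xb + ε) / (xa + xb + ε) ^ 3)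
      = -βm * (4 * xa + ε * (4 - ε / (ε + xb))) / (xa + xb + ε) ^ 3 ∧
    -βm * (4 * xa + ε * (4 - ε / (ε + xb))) / (xa + xb + ε) ^ 3 < 0 := by
  have hs : 0 < xa + xb + ε := by linarith
  have heb : 0 < ε + xb := by linarith
  constructor
  · field_simp
    ring
  · apply div_neg_of_neg_of_pos
    · have h1 : ε / (ε + xb) ≤ 1 := by
        rw [div_le_one heb]; linarith
      have h2 : 0 < 4 * xa + ε * (4 - ε / (ε + xb)) := by nlinarith
      nlinarith
    · positivity
end

section
/- Let m ≥ 1, and for each j ∈ {1,…,m} let β_j > 0, ε_j > 0, α_j ∈ ℝ. Define f(t) = Σ_j (β_j + √(β_j² + 4β_j ε_j (α_j − t)))/(2(α_j − t)) − C for a constant C > 0, on the interval I = (−∞, min_j α_j). Then f is strictly increasing on I; in particular f'(t) = Σ_j (β_j/(2(α_j − t)²))·(1 + (1 + 2(ε_j/β_j)(α_j − t))/√(1 + 4(ε_j/β_j)(α_j − t))) > 0 for all t ∈ I. -/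
/-!
Each summand is the positive root `x = (β + √(β² + 4βε u)) / (2u)` of `u x² - β x - β ε = 0`
at `u = α - t > 0`. Differentiating in `t` and rewriting `√(β² + 4βε u) = β √(1 + 4 (ε/β) u)`
gives the stated derivative, every summand of which is manifestly positive; a positive derivative
on the interval gives strict monotonicity by the mean value theorem.
-/

open Set Finset

lemma sqrt_one_add_mul_div_eq {b : ℝ} (hb : 0 < b) (e u : ℝ) :
    √(1 + 4 * (e / b) * u) = √(b ^ 2 + 4 * b * e * u) / b := by
  have hscale : b ^ 2 + 4 * b * e * u = b ^ 2 * (1 + 4 * (e / b) * u) := by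
    field_simp
  rw [hscale, Real.sqrt_mul (sq_nonneg b), Real.sqrt_sq hb.le, mul_div_cancel_left₀ _ hb.ne']

lemma hasDerivAt_root_div {b e a t : ℝ} (hb : 0 < b) (he : 0 ≤ e) (ht : t < a) :
    HasDerivAt (fun t => (b + √(b ^ 2 + 4 * b * e * (a - t))) / (2 * (a - t)))
      (b / (2 * (a - t) ^ 2) *
        (1 + (1 + 2 * (e / b) * (a - t)) / √(1 + 4 * (e / b) * (a - t)))) t := by
  have hu : 0 < a - t := sub_pos.mpr ht
  have hD : 0 < b ^ 2 + 4 * b * e * (a - t) := by positivity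
  have hsub : HasDerivAt (fun t : ℝ => a - t) (-1) t := by
    simpa using (hasDerivAt_id t).const_sub a
  have hnum := (((hsub.const_mul (4 * b * e)).const_add (b ^ 2)).sqrt hD.ne').const_add b
  refine (hnum.div (hsub.const_mul 2) (by positivity)).congr_deriv ?_
  rw [sqrt_one_add_mul_div_eq hb]
  have hs2 : √(b ^ 2 + 4 * b * e * (a - t)) ^ 2 = b ^ 2 + 4 * b * e * (a - t) :=
    Real.sq_sqrt hD.le
  have hs0 : 0 < √(b ^ 2 + 4 * b * e * (a - t)) := Real.sqrt_pos.mpr hD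
  generalize √(b ^ 2 + 4 * b * e * (a - t)) = s at hs0 hs2 ⊢
  field_simp
  linear_combination 2 * hs2

lemma root_div_deriv_pos {b e u : ℝ} (hb : 0 < b) (he : 0 ≤ e) (hu : 0 < u) :
    0 < b / (2 * u ^ 2) * (1 + (1 + 2 * (e / b) * u) / √(1 + 4 * (e / b) * u)) := by
  positivity

lemma strictMonoOn_of_hasDerivAt_pos {D : Set ℝ} (hD : Convex ℝ D) (hDo : IsOpen D)
    {f f' : ℝ → ℝ} (hf : ∀ x ∈ D, HasDerivAt f (f' x) x) (hf' : ∀ x ∈ D, 0 < f' x) :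
    StrictMonoOn f D := by
  refine strictMonoOn_of_hasDerivWithinAt_pos (f' := f') hD (HasDerivAt.continuousOn hf) ?_ ?_ <;>
    rw [hDo.interior_eq]
  exacts [fun x hx => (hf x hx).hasDerivWithinAt, hf']

theorem stmt_6_general (m : ℕ) (hm : 1 ≤ m) (β ε α : Fin m → ℝ)
    (hβ : ∀ j, 0 < β j) (hε : ∀ j, 0 < ε j) (C : ℝ)
    (f : ℝ → ℝ)
    (hf : ∀ t, f t = (∑ j, (β j + Real.sqrt ((β j) ^ 2 + 4 * β j * ε j * (α j - t))) /
        (2 * (α j - t))) - C) :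
    StrictMonoOn f (Iio (Finset.univ.inf' ⟨⟨0, hm⟩, Finset.mem_univ _⟩ α)) ∧
    ∀ t ∈ Iio (Finset.univ.inf' ⟨⟨0, hm⟩, Finset.mem_univ _⟩ α),
      HasDerivAt f (∑ j, (β j / (2 * (α j - t) ^ 2)) *
          (1 + (1 + 2 * (ε j / β j) * (α j - t)) /
            Real.sqrt (1 + 4 * (ε j / β j) * (α j - t)))) t ∧
      0 < ∑ j, (β j / (2 * (α j - t) ^ 2)) *
          (1 + (1 + 2 * (ε j / β j) * (α j - t)) /
            Real.sqrt (1 + 4 * (ε j / β j) * (α j - t))) := by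
  set M := Finset.univ.inf' ⟨⟨0, hm⟩, Finset.mem_univ _⟩ α
  refine (and_iff_right_of_imp fun key => ?_).2 fun t ht => ?_
  · exact strictMonoOn_of_hasDerivAt_pos (convex_Iio M) isOpen_Iio (fun t ht => (key t ht).1)
      fun t ht => (key t ht).2
  have hlt : ∀ j, t < α j := fun j => ht.trans_le (inf'_le _ (mem_univ j))
  refine ⟨?_, sum_pos (fun j _ => root_div_deriv_pos (hβ j) (hε j).le (sub_pos.mpr (hlt j)))
    ⟨⟨0, hm⟩, mem_univ _⟩⟩
  rw [funext hf]
  exact (HasDerivAt.fun_sum fun j _ => hasDerivAt_root_div (hβ j) (hε j).le (hlt j)).sub_const C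

theorem stmt_6 (m : ℕ) (hm : 1 ≤ m) (β ε α : Fin m → ℝ)
    (hβ : ∀ j, 0 < β j) (hε : ∀ j, 0 < ε j) (C : ℝ) (hC : 0 < C)
    (f : ℝ → ℝ)
    (hf : ∀ t, f t = (∑ j, (β j + Real.sqrt ((β j) ^ 2 + 4 * β j * ε j * (α j - t))) /
        (2 * (α j - t))) - C) :
    StrictMonoOn f (Iio (Finset.univ.inf' ⟨⟨0, hm⟩, Finset.mem_univ _⟩ α)) ∧
    ∀ t ∈ Iio (Finset.univ.inf' ⟨⟨0, hm⟩, Finset.mem_univ _⟩ α),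
      HasDerivAt f (∑ j, (β j / (2 * (α j - t) ^ 2)) *
          (1 + (1 + 2 * (ε j / β j) * (α j - t)) /
            Real.sqrt (1 + 4 * (ε j / β j) * (α j - t)))) t ∧
      0 < ∑ j, (β j / (2 * (α j - t) ^ 2)) *
          (1 + (1 + 2 * (ε j / β j) * (α j - t)) /
            Real.sqrt (1 + 4 * (ε j / β j) * (α j - t))) :=
  stmt_6_general m hm β ε α hβ hε C f hf
end

section
/- With f as in the previous context (β_j, ε_j > 0, C > 0, I = (−∞, min_j α_j)): lim_{t → −∞} f(t) = −C < 0 and lim_{t → (min_j α_j)⁻} f(t) = +∞. Combined with strict monotonicity of f on I, the equation f(t) = 0 has a unique solution t* ∈ I. -/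
/-!
Rationalising, each summand of `f` equals `2 β ε / (√(β² + 4 β ε (α_j - t)) - β)`, so it is
positive, strictly increasing in `t` and tends to `0` as `t → -∞`. Since `√(⋯) ≥ β`, the summand
is also at least `β / (α_j - t)`, so the one with `α_j = min α` blows up as `t → min α`. Hence
`f` increases continuously from `-C` to `+∞` on `(-∞, min α)`, and the intermediate value
theorem together with strict monotonicity gives the unique zero.
-/

open Set Finset Filter Topology

theorem StrictMonoOn.existsUnique_mem_Iio_eq {α δ : Type*} [ConditionallyCompleteLinearOrder α]
    [TopologicalSpace α] [OrderTopology α] [DenselyOrdered α] [NoMinOrder α]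
    [LinearOrder δ] [TopologicalSpace δ] [OrderClosedTopology δ] {f : α → δ} {b : α} {y : δ}
    (hmono : StrictMonoOn f (Iio b)) (hcont : ContinuousOn f (Iio b))
    (hbot : ∀ᶠ t in atBot, f t < y) (htop : ∀ᶠ t in 𝓝[<] b, y < f t) :
    ∃! t, t ∈ Iio b ∧ f t = y := by
  obtain ⟨a, hfa, hab⟩ := (hbot.and (eventually_lt_atBot b)).exists
  have : (𝓝[<] b).NeBot := nhdsLT_neBot_of_exists_lt ⟨a, hab⟩
  obtain ⟨c, ⟨hfc, hac⟩, hcb⟩ :=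
    ((htop.and (nhdsWithin_le_nhds (eventually_gt_nhds hab))).and self_mem_nhdsWithin).exists
  have hIcc : Icc a c ⊆ Iio b := fun t ht => lt_of_le_of_lt ht.2 hcb
  obtain ⟨t, ht, hft⟩ := intermediate_value_Icc hac.le (hcont.mono hIcc) ⟨hfa.le, hfc.le⟩
  exact ⟨t, ⟨hIcc ht, hft⟩, fun u ⟨hu, hfu⟩ => hmono.injOn hu (hIcc ht) (hfu.trans hft.symm)⟩

/-- One summand of `f`, in the variable `s = α_j - t`. -/
noncomputable def multiplierTerm (β ε s : ℝ) : ℝ :=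
  (β + √(β ^ 2 + 4 * β * ε * s)) / (2 * s)

section multiplierTerm

variable {β ε s : ℝ}

lemma lt_sqrt_sq_add_mul (hβ : 0 < β) (hε : 0 < ε) (hs : 0 < s) :
    β < √(β ^ 2 + 4 * β * ε * s) := by
  rw [Real.lt_sqrt hβ.le]
  nlinarith [mul_pos (mul_pos hβ hε) hs]

lemma le_sqrt_sq_add_mul (hβ : 0 ≤ β) (hε : 0 ≤ ε) (hs : 0 ≤ s) :
    β ≤ √(β ^ 2 + 4 * β * ε * s) :=
  Real.le_sqrt_of_sq_le (le_add_of_nonneg_right (by positivity))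

lemma multiplierTerm_eq_div_sqrt_sub (hβ : 0 < β) (hε : 0 < ε) (hs : 0 < s) :
    multiplierTerm β ε s = 2 * β * ε / (√(β ^ 2 + 4 * β * ε * s) - β) := by
  have hlt := lt_sqrt_sq_add_mul hβ hε hs
  have hsq : √(β ^ 2 + 4 * β * ε * s) ^ 2 = β ^ 2 + 4 * β * ε * s :=
    Real.sq_sqrt (by positivity)
  rw [multiplierTerm, div_eq_div_iff (by positivity) (by linarith)]
  linear_combination hsq

lemma div_le_multiplierTerm (hβ : 0 ≤ β) (hε : 0 ≤ ε) (hs : 0 < s) :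
    β / s ≤ multiplierTerm β ε s := by
  have := le_sqrt_sq_add_mul hβ hε hs.le
  rw [multiplierTerm, div_le_div_iff₀ hs (by positivity)]
  nlinarith

lemma multiplierTerm_pos (hβ : 0 < β) (hε : 0 ≤ ε) (hs : 0 < s) : 0 < multiplierTerm β ε s :=
  (div_pos hβ hs).trans_le (div_le_multiplierTerm hβ.le hε hs)

lemma strictAntiOn_multiplierTerm (hβ : 0 < β) (hε : 0 < ε) :
    StrictAntiOn (multiplierTerm β ε) (Ioi 0) := by
  intro s (hs : 0 < s) u hu hsu
  rw [multiplierTerm_eq_div_sqrt_sub hβ hε hs, multiplierTerm_eq_div_sqrt_sub hβ hε hu]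
  have hsqrt : √(β ^ 2 + 4 * β * ε * s) < √(β ^ 2 + 4 * β * ε * u) :=
    Real.sqrt_lt_sqrt (by positivity) (by gcongr)
  have := lt_sqrt_sq_add_mul hβ hε hs
  exact div_lt_div_of_pos_left (by positivity) (by linarith) (by linarith)

lemma tendsto_multiplierTerm_atTop (hβ : 0 < β) (hε : 0 < ε) :
    Tendsto (multiplierTerm β ε) atTop (𝓝 0) := by
  have hden : Tendsto (fun s => √(β ^ 2 + 4 * β * ε * s) - β) atTop atTop :=
    tendsto_atTop_add_const_right _ _ <| Real.tendsto_sqrt_atTop.comp <|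
      tendsto_atTop_add_const_left _ _ <| tendsto_id.const_mul_atTop (by positivity)
  refine ((tendsto_const_nhds (x := 2 * β * ε)).div_atTop hden).congr' ?_
  filter_upwards [eventually_gt_atTop 0] with s hs
  exact (multiplierTerm_eq_div_sqrt_sub hβ hε hs).symm

lemma tendsto_multiplierTerm_nhdsGT_zero (hβ : 0 < β) (hε : 0 ≤ ε) :
    Tendsto (multiplierTerm β ε) (𝓝[>] 0) atTop := by
  refine tendsto_atTop_mono' _ ?_ (tendsto_inv_nhdsGT_zero.const_mul_atTop hβ)
  filter_upwards [self_mem_nhdsWithin] with s hs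
  exact div_le_multiplierTerm hβ.le hε hs

lemma continuousOn_multiplierTerm : ContinuousOn (multiplierTerm β ε) {0}ᶜ :=
  ContinuousOn.div (by fun_prop) (by fun_prop) fun s hs => mul_ne_zero two_ne_zero hs

end multiplierTerm

noncomputable def multiplierSum {ι : Type*} (s : Finset ι) (β ε α : ι → ℝ) (t : ℝ) : ℝ :=
  ∑ j ∈ s, multiplierTerm (β j) (ε j) (α j - t)

section multiplierSum

variable {ι : Type*} {s : Finset ι} {β ε α : ι → ℝ}

lemma tendsto_multiplierSum_atBot (hβ : ∀ j ∈ s, 0 < β j) (hε : ∀ j ∈ s, 0 < ε j) :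
    Tendsto (multiplierSum s β ε α) atBot (𝓝 0) := by
  rw [← sum_const_zero (s := s)]
  exact tendsto_finsetSum s fun j hj => (tendsto_multiplierTerm_atTop (hβ j hj) (hε j hj)).comp
    (tendsto_atTop_add_const_left _ _ tendsto_neg_atBot_atTop)

lemma sub_pos_of_lt_inf' (hs : s.Nonempty) {t : ℝ} (ht : t < s.inf' hs α) {j : ι} (hj : j ∈ s) :
    0 < α j - t :=
  sub_pos.2 ((lt_inf'_iff hs).1 ht j hj)

lemma tendsto_multiplierSum_nhdsLT_inf' (hs : s.Nonempty) (hβ : ∀ j ∈ s, 0 < β j)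
    (hε : ∀ j ∈ s, 0 ≤ ε j) : Tendsto (multiplierSum s β ε α) (𝓝[<] (s.inf' hs α)) atTop := by
  obtain ⟨i, hi, hαi⟩ := exists_mem_eq_inf' hs α
  have hgap : Tendsto (fun t => α i - t) (𝓝[<] (s.inf' hs α)) (𝓝[>] 0) := by
    refine tendsto_nhdsWithin_of_tendsto_nhds_of_eventually_within _ ?_ ?_
    · rw [hαi]
      exact ((continuous_sub_left (α i)).tendsto' _ _ (sub_self _)).mono_left nhdsWithin_le_nhds
    · filter_upwards [self_mem_nhdsWithin] with t ht using sub_pos_of_lt_inf' hs ht hi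
  refine tendsto_atTop_mono' _ ?_
    ((tendsto_multiplierTerm_nhdsGT_zero (hβ i hi) (hε i hi)).comp hgap)
  filter_upwards [self_mem_nhdsWithin] with t (ht : t < _)
  exact single_le_sum (f := fun j => multiplierTerm (β j) (ε j) (α j - t))
    (fun j hj => (multiplierTerm_pos (hβ j hj) (hε j hj) (sub_pos_of_lt_inf' hs ht hj)).le) hi

lemma strictMonoOn_multiplierSum (hs : s.Nonempty) (hβ : ∀ j ∈ s, 0 < β j)
    (hε : ∀ j ∈ s, 0 < ε j) : StrictMonoOn (multiplierSum s β ε α) (Iio (s.inf' hs α)) :=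
  fun t (ht : t < _) u (hu : u < _) htu => sum_lt_sum_of_nonempty hs fun j hj =>
    strictAntiOn_multiplierTerm (hβ j hj) (hε j hj) (sub_pos_of_lt_inf' hs hu hj)
      (sub_pos_of_lt_inf' hs ht hj) (sub_lt_sub_left htu (α j))

lemma continuousOn_multiplierSum (hs : s.Nonempty) :
    ContinuousOn (multiplierSum s β ε α) (Iio (s.inf' hs α)) :=
  continuousOn_finsetSum s fun j hj => continuousOn_multiplierTerm.comp (by fun_prop)
    fun t (ht : t < _) => (sub_pos_of_lt_inf' hs ht hj).ne'

end multiplierSum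

theorem stmt_7 (m : ℕ) (hm : 1 ≤ m) (β ε α : Fin m → ℝ)
    (hβ : ∀ j, 0 < β j) (hε : ∀ j, 0 < ε j) (C : ℝ) (hC : 0 < C)
    (f : ℝ → ℝ)
    (hf : ∀ t, f t = (∑ j, (β j + Real.sqrt ((β j) ^ 2 + 4 * β j * ε j * (α j - t))) /
        (2 * (α j - t))) - C) :
    Tendsto f atBot (nhds (-C)) ∧
    Tendsto f (nhdsWithin (Finset.univ.inf' ⟨⟨0, hm⟩, Finset.mem_univ _⟩ α)
      (Iio (Finset.univ.inf' ⟨⟨0, hm⟩, Finset.mem_univ _⟩ α))) atTop ∧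
    ∃! t : ℝ, t ∈ Iio (Finset.univ.inf' ⟨⟨0, hm⟩, Finset.mem_univ _⟩ α) ∧ f t = 0 := by
  have hne : (Finset.univ : Finset (Fin m)).Nonempty := ⟨⟨0, hm⟩, mem_univ _⟩
  have hβ' : ∀ j ∈ Finset.univ, 0 < β j := fun j _ => hβ j
  have hε' : ∀ j ∈ Finset.univ, 0 < ε j := fun j _ => hε j
  obtain rfl : f = fun t => multiplierSum Finset.univ β ε α t - C := funext hf
  have hbot : Tendsto (fun t => multiplierSum Finset.univ β ε α t - C) atBot (𝓝 (-C)) := by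
    simpa using (tendsto_multiplierSum_atBot (α := α) hβ' hε').sub_const C
  have htop := tendsto_atTop_add_const_right _ (-C)
    (tendsto_multiplierSum_nhdsLT_inf' (α := α) hne hβ' fun j hj => (hε' j hj).le)
  simp only [← sub_eq_add_neg] at htop
  refine ⟨hbot, htop, StrictMonoOn.existsUnique_mem_Iio_eq ?_ ?_
    (hbot.eventually_lt_const (neg_neg_of_pos hC)) (htop.eventually_gt_atTop 0)⟩
  · exact fun t ht u hu htu =>
      sub_lt_sub_right (strictMonoOn_multiplierSum hne hβ' hε' ht hu htu) C
  · exact (continuousOn_multiplierSum hne).sub continuousOn_const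
end

section
/- In the two-region game, suppose z₁* ∈ (0, X_b) satisfies the first-order condition β₁ε₁/(z₁* + ε₁)² − β₂(X_a + ε₂)/(X_a + X_b − z₁* + ε₂)² + β_c2 − β_c1 = 0. Then the profile (x_a, x_b) = ((0, X_a), (z₁*, X_b − z₁*)) is a Nash equilibrium if and only if (X_b − z₁* − X_a)β₂/(X_a + X_b − z₁* + ε₂)² − β₁z₁*/(z₁* + ε₁)² ≥ 0. -/
set_option maxHeartbeats 800000


open Set

/-- Payoff of a player allocating `(y₁, y₂)` against an opponent allocating `(w₁, w₂)`
in the two-region Blotto-like ride-hailing game. -/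
noncomputable def payoff (β₁ β₂ ε₁ ε₂ c₁ c₂ y₁ y₂ w₁ w₂ : ℝ) : ℝ :=
  y₁ * (β₁ / (y₁ + w₁ + ε₁) - c₁) + y₂ * (β₂ / (y₂ + w₂ + ε₂) - c₂)

/-- `(a₁,a₂)` for player a and `(b₁,b₂)` for player b form a Nash equilibrium of the
two-region game with fleet sizes `Xa`, `Xb`. -/
def isNE (β₁ β₂ ε₁ ε₂ c₁ c₂ Xa Xb a₁ a₂ b₁ b₂ : ℝ) : Prop :=
  (0 ≤ a₁ ∧ 0 ≤ a₂ ∧ a₁ + a₂ = Xa ∧ 0 ≤ b₁ ∧ 0 ≤ b₂ ∧ b₁ + b₂ = Xb) ∧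
  (∀ y₁ y₂ : ℝ, 0 ≤ y₁ → 0 ≤ y₂ → y₁ + y₂ = Xa →
    payoff β₁ β₂ ε₁ ε₂ c₁ c₂ y₁ y₂ b₁ b₂ ≤ payoff β₁ β₂ ε₁ ε₂ c₁ c₂ a₁ a₂ b₁ b₂) ∧
  (∀ y₁ y₂ : ℝ, 0 ≤ y₁ → 0 ≤ y₂ → y₁ + y₂ = Xb →
    payoff β₁ β₂ ε₁ ε₂ c₁ c₂ y₁ y₂ a₁ a₂ ≤ payoff β₁ β₂ ε₁ ε₂ c₁ c₂ b₁ b₂ a₁ a₂)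

theorem stmt_12 (β₁ β₂ ε₁ ε₂ c₁ c₂ Xa Xb z : ℝ)
    (hβ₁ : 0 < β₁) (hβ₂ : 0 < β₂) (hε₁ : 0 < ε₁) (hε₂ : 0 < ε₂)
    (hXa : 0 < Xa) (hXb : 0 < Xb) (hz : z ∈ Ioo 0 Xb)
    (hFOC : β₁ * ε₁ / (z + ε₁) ^ 2 -
      β₂ * (Xa + ε₂) / (Xa + Xb - z + ε₂) ^ 2 + c₂ - c₁ = 0) :
    isNE β₁ β₂ ε₁ ε₂ c₁ c₂ Xa Xb 0 Xa z (Xb - z) ↔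
      0 ≤ (Xb - z - Xa) * β₂ / (Xa + Xb - z + ε₂) ^ 2 - β₁ * z / (z + ε₁) ^ 2 := by
  obtain ⟨hz0, hzXb⟩ := hz
  have hA : (0:ℝ) < z + ε₁ := by linarith
  have hS : (0:ℝ) < Xa + Xb - z + ε₂ := by linarith
  have hAne : z + ε₁ ≠ 0 := ne_of_gt hA
  have hSne : Xa + Xb - z + ε₂ ≠ 0 := ne_of_gt hS
  have hc : c₂ - c₁ = β₂ * (Xa + ε₂) / (Xa + Xb - z + ε₂) ^ 2
      - β₁ * ε₁ / (z + ε₁) ^ 2 := by linarith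
  -- rewrite the target RHS as -D where D is a's marginal payoff at 0
  have key : (Xb - z - Xa) * β₂ / (Xa + Xb - z + ε₂) ^ 2 - β₁ * z / (z + ε₁) ^ 2
      = -(β₁ / (z + ε₁) - β₂ * (Xb - z + ε₂) / (Xa + Xb - z + ε₂) ^ 2 + c₂ - c₁) := by
    rw [sub_eq_iff_eq_add] at hc
    rw [hc]; field_simp; ring
  rw [key]
  -- identity for player a's deviation
  have hidA : ∀ t : ℝ, 0 ≤ t → t ≤ Xa →
      payoff β₁ β₂ ε₁ ε₂ c₁ c₂ t (Xa - t) z (Xb - z)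
      - payoff β₁ β₂ ε₁ ε₂ c₁ c₂ 0 Xa z (Xb - z)
      = t * ((β₁ / (z + ε₁) - β₂ * (Xb - z + ε₂) / (Xa + Xb - z + ε₂) ^ 2 + c₂ - c₁)
           - β₁ * t / ((z + ε₁) * (t + z + ε₁))
           - β₂ * (Xb - z + ε₂) * t / ((Xa + Xb - z + ε₂) ^ 2 * (Xa + Xb - z + ε₂ - t))) := by
    intro t ht0 htXa
    have h1 : t + z + ε₁ ≠ 0 := by positivity
    have h2 : Xa + Xb - z + ε₂ - t ≠ 0 := by intro h; nlinarith
    have h3 : Xa - t + (Xb - z) + ε₂ ≠ 0 := by intro h; nlinarith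
    have h5 : Xa + (Xb - z) + ε₂ ≠ 0 := by intro h; nlinarith
    have p1 : t * (β₁ / (t + z + ε₁) - c₁) =
        t * (β₁ / (z + ε₁) - c₁) - t * (β₁ * t / ((z + ε₁) * (t + z + ε₁))) := by
      field_simp; ring
    have p2 : (Xa - t) * (β₂ / (Xa - t + (Xb - z) + ε₂) - c₂)
        - Xa * (β₂ / (Xa + (Xb - z) + ε₂) - c₂) =
        t * (c₂ - β₂ * (Xb - z + ε₂) / (Xa + Xb - z + ε₂) ^ 2)
        - t * (β₂ * (Xb - z + ε₂) * t /
            ((Xa + Xb - z + ε₂) ^ 2 * (Xa + Xb - z + ε₂ - t))) := by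
      field_simp; ring
    simp only [payoff]
    linear_combination p1 + p2
  -- identity for player b's deviation (uses the FOC)
  have hidB : ∀ t : ℝ, 0 ≤ t → t ≤ Xb →
      payoff β₁ β₂ ε₁ ε₂ c₁ c₂ t (Xb - t) 0 Xa
      - payoff β₁ β₂ ε₁ ε₂ c₁ c₂ z (Xb - z) 0 Xa
      = -((t - z) ^ 2 * (β₁ * ε₁ / ((t + ε₁) * (z + ε₁) ^ 2)
        + β₂ * (Xa + ε₂) / ((Xa + Xb - t + ε₂) * (Xa + Xb - z + ε₂) ^ 2))) := by
    intro t ht0 htXb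
    have h1 : t + ε₁ ≠ 0 := by positivity
    have h2 : Xa + Xb - t + ε₂ ≠ 0 := by intro h; nlinarith
    have h3 : t + 0 + ε₁ ≠ 0 := by intro h; nlinarith
    have h4 : Xb - t + Xa + ε₂ ≠ 0 := by intro h; nlinarith
    have h5 : z + 0 + ε₁ ≠ 0 := by intro h; nlinarith
    have h6 : Xb - z + Xa + ε₂ ≠ 0 := by intro h; nlinarith
    have q1 : t * (β₁ / (t + 0 + ε₁) - c₁) - z * (β₁ / (z + 0 + ε₁) - c₁)
        = (t - z) * (β₁ * ε₁ / ((t + ε₁) * (z + ε₁))) - (t - z) * c₁ := by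
      field_simp; ring
    have q2 : (Xb - t) * (β₂ / (Xb - t + Xa + ε₂) - c₂)
        - (Xb - z) * (β₂ / (Xb - z + Xa + ε₂) - c₂)
        = -((t - z) * (β₂ * (Xa + ε₂) /
            ((Xa + Xb - t + ε₂) * (Xa + Xb - z + ε₂)))) + (t - z) * c₂ := by
      field_simp; ring
    have r1 : β₁ * ε₁ / ((t + ε₁) * (z + ε₁))
        = β₁ * ε₁ / (z + ε₁) ^ 2 + (z - t) * (β₁ * ε₁ / ((t + ε₁) * (z + ε₁) ^ 2)) := by
      field_simp; ring
    have r2 : β₂ * (Xa + ε₂) / ((Xa + Xb - t + ε₂) * (Xa + Xb - z + ε₂))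
        = β₂ * (Xa + ε₂) / (Xa + Xb - z + ε₂) ^ 2
          - (z - t) * (β₂ * (Xa + ε₂) /
            ((Xa + Xb - t + ε₂) * (Xa + Xb - z + ε₂) ^ 2)) := by
      field_simp; ring
    simp only [payoff]
    linear_combination q1 + q2 + (t - z) * r1 - (t - z) * r2 + (t - z) * hc
  constructor
  · -- NE → 0 ≤ -D
    intro hNE
    by_contra hcon
    push_neg at hcon
    set D : ℝ := β₁ / (z + ε₁) - β₂ * (Xb - z + ε₂) / (Xa + Xb - z + ε₂) ^ 2 + c₂ - c₁
      with hDdef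
    have hD : 0 < D := by linarith
    have hKpos : (0:ℝ) < β₁ / (z + ε₁) ^ 2 + β₂ / (Xa + Xb - z + ε₂) ^ 2 := by positivity
    set K : ℝ := β₁ / (z + ε₁) ^ 2 + β₂ / (Xa + Xb - z + ε₂) ^ 2 with hKdef
    set t : ℝ := min Xa (D / (2 * K)) with htdef
    have ht0 : 0 < t := lt_min hXa (by positivity)
    have htXa : t ≤ Xa := min_le_left _ _
    have htK : t * K ≤ D / 2 := by
      have h : t ≤ D / (2 * K) := min_le_right _ _
      calc t * K ≤ (D / (2 * K)) * K := mul_le_mul_of_nonneg_right h hKpos.le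
        _ = D / 2 := by field_simp
    have h2 := hNE.2.1 t (Xa - t) ht0.le (by linarith) (by ring)
    have hid := hidA t ht0.le htXa
    have hP : β₁ * t / ((z + ε₁) * (t + z + ε₁)) ≤ β₁ / (z + ε₁) ^ 2 * t := by
      have he : β₁ / (z + ε₁) ^ 2 * t = β₁ * t / ((z + ε₁) * (z + ε₁)) := by
        rw [sq]; ring
      rw [he]
      gcongr
      nlinarith
    have hQ : β₂ * (Xb - z + ε₂) * t / ((Xa + Xb - z + ε₂) ^ 2 * (Xa + Xb - z + ε₂ - t))
        ≤ β₂ / (Xa + Xb - z + ε₂) ^ 2 * t := by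
      have hden : (0:ℝ) < (Xa + Xb - z + ε₂) ^ 2 * (Xa + Xb - z + ε₂ - t) := by
        have h : (0:ℝ) < Xa + Xb - z + ε₂ - t := by nlinarith
        positivity
      have hW : (0:ℝ) < Xb - z + ε₂ := by linarith
      have he : β₂ / (Xa + Xb - z + ε₂) ^ 2 * t
          = β₂ * (Xb - z + ε₂) * t / ((Xa + Xb - z + ε₂) ^ 2 * (Xb - z + ε₂)) := by
        field_simp
      rw [he]
      gcongr
      nlinarith [sq_nonneg (Xa + Xb - z + ε₂)]
    have hdiffpos : 0 < payoff β₁ β₂ ε₁ ε₂ c₁ c₂ t (Xa - t) z (Xb - z)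
        - payoff β₁ β₂ ε₁ ε₂ c₁ c₂ 0 Xa z (Xb - z) := by
      rw [hid]
      have hKt : β₁ / (z + ε₁) ^ 2 * t + β₂ / (Xa + Xb - z + ε₂) ^ 2 * t = t * K := by
        rw [hKdef]; ring
      have hbr : D / 2 ≤ D - β₁ * t / ((z + ε₁) * (t + z + ε₁))
          - β₂ * (Xb - z + ε₂) * t /
            ((Xa + Xb - z + ε₂) ^ 2 * (Xa + Xb - z + ε₂ - t)) := by linarith
      have := mul_pos ht0 (lt_of_lt_of_le (half_pos hD) hbr)
      linarith
    linarith
  · -- 0 ≤ -D → NE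
    intro hD
    refine ⟨⟨le_refl 0, hXa.le, by ring, hz0.le, by linarith, by ring⟩, ?_, ?_⟩
    · intro y₁ y₂ hy₁ hy₂ hsum
      have hy₂' : y₂ = Xa - y₁ := by linarith
      subst hy₂'
      have hid := hidA y₁ hy₁ (by linarith)
      have hP : 0 ≤ β₁ * y₁ / ((z + ε₁) * (y₁ + z + ε₁)) := by positivity
      have hQ : 0 ≤ β₂ * (Xb - z + ε₂) * y₁ /
          ((Xa + Xb - z + ε₂) ^ 2 * (Xa + Xb - z + ε₂ - y₁)) := by
        have h1 : (0:ℝ) < Xb - z + ε₂ := by linarith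
        have h2 : (0:ℝ) < Xa + Xb - z + ε₂ - y₁ := by linarith
        positivity
      nlinarith
    · intro y₁ y₂ hy₁ hy₂ hsum
      have hy₂' : y₂ = Xb - y₁ := by linarith
      subst hy₂'
      have hid := hidB y₁ hy₁ (by linarith)
      have hM : 0 ≤ (y₁ - z) ^ 2 * (β₁ * ε₁ / ((y₁ + ε₁) * (z + ε₁) ^ 2)
        + β₂ * (Xa + ε₂) / ((Xa + Xb - y₁ + ε₂) * (Xa + Xb - z + ε₂) ^ 2)) := by
        have hp : (0:ℝ) < y₁ + ε₁ := by linarith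
        have h1 : (0:ℝ) < Xa + Xb - y₁ + ε₂ := by linarith
        positivity
      linarith
end

section
/- In the two-region game, the profile ((0, X_a), (X_b, 0)) — player a entirely in region 2 and player b entirely in region 1 — is never a Nash equilibrium: if V̲ := β_c2 − β_c1 + β₁ε₁/(X_b + ε₁)² − β₂/(X_a + ε₂) ≥ 0 (so that z* = X_b is player b's best response), the KKT multiplier for player a's constraint x_{a,1} ≥ 0 equals −V̲ − β₁X_b/(X_b + ε₁)² − β₂X_a/(X_a + ε₂)², which is strictly negative. -/
open Set

theorem stmt_13 (β₁ β₂ ε₁ ε₂ c₁ c₂ Xa Xb : ℝ)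
    (hβ₁ : 0 < β₁) (hβ₂ : 0 < β₂) (hε₁ : 0 < ε₁) (hε₂ : 0 < ε₂)
    (hXa : 0 < Xa) (hXb : 0 < Xb) :
    ¬ isNE β₁ β₂ ε₁ ε₂ c₁ c₂ Xa Xb 0 Xa Xb 0 ∧
    (0 ≤ c₂ - c₁ + β₁ * ε₁ / (Xb + ε₁) ^ 2 - β₂ / (Xa + ε₂) →
      -(c₂ - c₁ + β₁ * ε₁ / (Xb + ε₁) ^ 2 - β₂ / (Xa + ε₂)) -
        β₁ * Xb / (Xb + ε₁) ^ 2 - β₂ * Xa / (Xa + ε₂) ^ 2 < 0) := by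
  constructor
  · rintro ⟨-, h2, h3⟩
    set δ := min Xa Xb / 2 with hδdef
    have hδpos : 0 < δ := by positivity
    have hδa : δ ≤ Xa / 2 := by
      have := min_le_left Xa Xb; simp [hδdef]; linarith
    have hδb : δ ≤ Xb / 2 := by
      have := min_le_right Xa Xb; simp [hδdef]; linarith
    have hA : 0 < Xa + ε₂ := by linarith
    have hA' : 0 < Xa - δ + ε₂ := by linarith
    have hA'' : 0 < δ + Xa + ε₂ := by linarith
    have hB : 0 < Xb + ε₁ := by linarith
    have hB' : 0 < Xb - δ + ε₁ := by linarith
    have hB'' : 0 < δ + Xb + ε₁ := by linarith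
    have h2' := h2 δ (Xa - δ) (le_of_lt hδpos) (by linarith) (by ring)
    have h3' := h3 (Xb - δ) δ (by linarith) (le_of_lt hδpos) (by ring)
    simp only [payoff] at h2' h3'
    -- β₁ part
    have e1 : δ * (β₁ / (δ + Xb + ε₁)) + (Xb - δ) * (β₁ / (Xb - δ + 0 + ε₁))
        - Xb * (β₁ / (Xb + 0 + ε₁))
        = δ * β₁ * ((Xb - δ + ε₁) * (Xb + ε₁) - ε₁ * (δ + Xb + ε₁))
          / ((δ + Xb + ε₁) * ((Xb - δ + ε₁) * (Xb + ε₁))) := by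
      rw [show Xb - δ + 0 + ε₁ = Xb - δ + ε₁ by ring, show Xb + 0 + ε₁ = Xb + ε₁ by ring]
      field_simp
      ring
    have p1 : 0 < (Xb - δ + ε₁) * (Xb + ε₁) - ε₁ * (δ + Xb + ε₁) := by nlinarith
    have s1 : 0 < δ * (β₁ / (δ + Xb + ε₁)) + (Xb - δ) * (β₁ / (Xb - δ + 0 + ε₁))
        - Xb * (β₁ / (Xb + 0 + ε₁)) := by
      rw [e1]; positivity
    -- β₂ part
    have e2 : δ * (β₂ / (δ + Xa + ε₂)) + (Xa - δ) * (β₂ / (Xa - δ + 0 + ε₂))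
        - Xa * (β₂ / (Xa + 0 + ε₂))
        = δ * β₂ * ((Xa - δ + ε₂) * (Xa + ε₂) - ε₂ * (δ + Xa + ε₂))
          / ((δ + Xa + ε₂) * ((Xa - δ + ε₂) * (Xa + ε₂))) := by
      rw [show Xa - δ + 0 + ε₂ = Xa - δ + ε₂ by ring, show Xa + 0 + ε₂ = Xa + ε₂ by ring]
      field_simp
      ring
    have p2 : 0 < (Xa - δ + ε₂) * (Xa + ε₂) - ε₂ * (δ + Xa + ε₂) := by nlinarith
    have s2 : 0 < δ * (β₂ / (δ + Xa + ε₂)) + (Xa - δ) * (β₂ / (Xa - δ + 0 + ε₂))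
        - Xa * (β₂ / (Xa + 0 + ε₂)) := by
      rw [e2]; positivity
    nlinarith [s1, s2, h2', h3']
  · intro hV
    have h1 : 0 < β₁ * Xb / (Xb + ε₁) ^ 2 := by positivity
    have h2 : 0 < β₂ * Xa / (Xa + ε₂) ^ 2 := by positivity
    linarith
end

section
/- In the two-region game, if player b's best response to player a playing (0, X_a) is z* = 0 (which requires V̄ := β_c2 − β_c1 + β₁/ε₁ − β₂(X_a + ε₂)/(X_a + X_b + ε₂)² ≤ 0), then ((0, X_a), (0, X_b)) is a Nash equilibrium if and only if −V̄ + (X_b − X_a)β₂/(X_a + X_b + ε₂)² ≥ 0. -/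
open Set

lemma payoff_ident (β₁ β₂ ε₁ ε₂ c₁ c₂ X W t : ℝ) (hε₁ : 0 < ε₁) (hε₂ : 0 < ε₂)
    (hW : 0 < W) (ht : 0 ≤ t) (htX : t ≤ X) :
    payoff β₁ β₂ ε₁ ε₂ c₁ c₂ 0 X 0 W - payoff β₁ β₂ ε₁ ε₂ c₁ c₂ t (X - t) 0 W
      = t * (c₁ - c₂ - β₁ / (t + ε₁)
          + β₂ * (W + ε₂) / ((X + W + ε₂) * (X + W + ε₂ - t))) := by
  have h1 : t + 0 + ε₁ > 0 := by linarith
  have h2 : X - t + W + ε₂ > 0 := by linarith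
  have h3 : X + W + ε₂ > 0 := by linarith
  have h4 : X + W + ε₂ - t > 0 := by linarith
  unfold payoff
  field_simp
  ring

lemma hmono (β₁ β₂ ε₁ ε₂ c₁ c₂ X W t : ℝ) (hβ₁ : 0 < β₁) (hβ₂ : 0 < β₂)
    (hε₁ : 0 < ε₁) (hε₂ : 0 < ε₂) (hX : 0 < X) (hW : 0 < W)
    (ht : 0 ≤ t) (htX : t ≤ X) :
    c₁ - c₂ - β₁ / ε₁ + β₂ * (W + ε₂) / (X + W + ε₂) ^ 2
      ≤ c₁ - c₂ - β₁ / (t + ε₁)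
          + β₂ * (W + ε₂) / ((X + W + ε₂) * (X + W + ε₂ - t)) := by
  have h1 : (0:ℝ) < t + ε₁ := by linarith
  have h3 : (0:ℝ) < X + W + ε₂ := by linarith
  have h4 : (0:ℝ) < X + W + ε₂ - t := by linarith
  have e1 : β₁ / (t + ε₁) ≤ β₁ / ε₁ := by gcongr <;> linarith
  have e2 : β₂ * (W + ε₂) / (X + W + ε₂) ^ 2
      ≤ β₂ * (W + ε₂) / ((X + W + ε₂) * (X + W + ε₂ - t)) := by
    have h5 : (X + W + ε₂) ^ 2 = (X + W + ε₂) * (X + W + ε₂) := sq (X + W + ε₂) ▸ rfl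
    rw [h5]
    gcongr <;> first | positivity | nlinarith
  linarith

lemma hupper (β₁ β₂ ε₁ ε₂ c₁ c₂ X W t : ℝ) (hβ₁ : 0 < β₁) (hβ₂ : 0 < β₂)
    (hε₁ : 0 < ε₁) (hε₂ : 0 < ε₂) (hX : 0 < X) (hW : 0 < W)
    (ht : 0 ≤ t) (htX : t ≤ X) :
    c₁ - c₂ - β₁ / (t + ε₁)
          + β₂ * (W + ε₂) / ((X + W + ε₂) * (X + W + ε₂ - t))
      ≤ c₁ - c₂ - β₁ / ε₁ + β₂ * (W + ε₂) / (X + W + ε₂) ^ 2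
          + (β₁ / ε₁ ^ 2 + β₂ / (X + W + ε₂) ^ 2) * t := by
  have h1 : (0:ℝ) < t + ε₁ := by linarith
  have h3 : (0:ℝ) < X + W + ε₂ := by linarith
  have h4 : (0:ℝ) < X + W + ε₂ - t := by linarith
  have hWε : (0:ℝ) < W + ε₂ := by linarith
  have e1 : β₁ / ε₁ - β₁ / (t + ε₁) ≤ β₁ / ε₁ ^ 2 * t := by
    calc β₁ / ε₁ - β₁ / (t + ε₁) = β₁ * t / (ε₁ * (t + ε₁)) := by
          field_simp; ring
      _ ≤ β₁ * t / (ε₁ * ε₁) := by gcongr <;> first | positivity | nlinarith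
      _ = β₁ / ε₁ ^ 2 * t := by rw [sq]; ring
  have e2 : β₂ * (W + ε₂) / ((X + W + ε₂) * (X + W + ε₂ - t))
      - β₂ * (W + ε₂) / (X + W + ε₂) ^ 2 ≤ β₂ / (X + W + ε₂) ^ 2 * t := by
    calc β₂ * (W + ε₂) / ((X + W + ε₂) * (X + W + ε₂ - t))
          - β₂ * (W + ε₂) / (X + W + ε₂) ^ 2
        = β₂ * (W + ε₂) * t / ((X + W + ε₂) ^ 2 * (X + W + ε₂ - t)) := by
          field_simp; ring
      _ ≤ β₂ * (W + ε₂) * t / ((X + W + ε₂) ^ 2 * (W + ε₂)) := by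
          gcongr <;> first | positivity | nlinarith
      _ = β₂ / (X + W + ε₂) ^ 2 * t := by
          field_simp
  linarith

/-- If the marginal condition holds, (0, X) is a best response to (0, W). -/
lemma br_of_cond (β₁ β₂ ε₁ ε₂ c₁ c₂ X W : ℝ) (hβ₁ : 0 < β₁) (hβ₂ : 0 < β₂)
    (hε₁ : 0 < ε₁) (hε₂ : 0 < ε₂) (hX : 0 < X) (hW : 0 < W)
    (hcond : 0 ≤ c₁ - c₂ - β₁ / ε₁ + β₂ * (W + ε₂) / (X + W + ε₂) ^ 2)
    (t : ℝ) (ht : 0 ≤ t) (htX : t ≤ X) :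
    payoff β₁ β₂ ε₁ ε₂ c₁ c₂ t (X - t) 0 W ≤ payoff β₁ β₂ ε₁ ε₂ c₁ c₂ 0 X 0 W := by
  have hid := payoff_ident β₁ β₂ ε₁ ε₂ c₁ c₂ X W t hε₁ hε₂ hW ht htX
  have hm := hmono β₁ β₂ ε₁ ε₂ c₁ c₂ X W t hβ₁ hβ₂ hε₁ hε₂ hX hW ht htX
  nlinarith [mul_nonneg ht (le_trans hcond hm)]

/-- Conversely, if (0, X) is a best response to (0, W), the marginal condition holds. -/
lemma cond_of_br (β₁ β₂ ε₁ ε₂ c₁ c₂ X W : ℝ) (hβ₁ : 0 < β₁) (hβ₂ : 0 < β₂)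
    (hε₁ : 0 < ε₁) (hε₂ : 0 < ε₂) (hX : 0 < X) (hW : 0 < W)
    (hbr : ∀ t : ℝ, 0 ≤ t → t ≤ X →
      payoff β₁ β₂ ε₁ ε₂ c₁ c₂ t (X - t) 0 W ≤ payoff β₁ β₂ ε₁ ε₂ c₁ c₂ 0 X 0 W) :
    0 ≤ c₁ - c₂ - β₁ / ε₁ + β₂ * (W + ε₂) / (X + W + ε₂) ^ 2 := by
  by_contra hneg
  push_neg at hneg
  set h0 : ℝ := c₁ - c₂ - β₁ / ε₁ + β₂ * (W + ε₂) / (X + W + ε₂) ^ 2 with hh0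
  set C : ℝ := β₁ / ε₁ ^ 2 + β₂ / (X + W + ε₂) ^ 2 with hC
  have hCpos : 0 < C := by
    have h3 : (0:ℝ) < X + W + ε₂ := by linarith
    positivity
  set t₀ : ℝ := min X (-h0 / (2 * C)) with ht₀
  have hnegpos : 0 < -h0 := by linarith
  have ht₀pos : 0 < t₀ := lt_min hX (div_pos hnegpos (by positivity))
  have ht₀X : t₀ ≤ X := min_le_left _ _
  have ht₀C : t₀ ≤ -h0 / (2 * C) := min_le_right _ _
  have hid := payoff_ident β₁ β₂ ε₁ ε₂ c₁ c₂ X W t₀ hε₁ hε₂ hW ht₀pos.le ht₀X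
  have hineq := hbr t₀ ht₀pos.le ht₀X
  have hprod : 0 ≤ t₀ * (c₁ - c₂ - β₁ / (t₀ + ε₁)
      + β₂ * (W + ε₂) / ((X + W + ε₂) * (X + W + ε₂ - t₀))) := by linarith
  have hht : 0 ≤ c₁ - c₂ - β₁ / (t₀ + ε₁)
      + β₂ * (W + ε₂) / ((X + W + ε₂) * (X + W + ε₂ - t₀)) :=
    nonneg_of_mul_nonneg_right hprod ht₀pos
  have hup := hupper β₁ β₂ ε₁ ε₂ c₁ c₂ X W t₀ hβ₁ hβ₂ hε₁ hε₂ hX hW ht₀pos.le ht₀X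
  rw [← hh0, ← hC] at hup
  have hCt : C * t₀ ≤ -h0 / 2 := by
    have h := mul_le_mul_of_nonneg_left ht₀C hCpos.le
    have heq : C * (-h0 / (2 * C)) = -h0 / 2 := by
      field_simp
    linarith
  have hfin : (0:ℝ) ≤ h0 + C * t₀ := le_trans hht hup
  clear_value t₀ C h0
  linarith

theorem stmt_14 (β₁ β₂ ε₁ ε₂ c₁ c₂ Xa Xb : ℝ)
    (hβ₁ : 0 < β₁) (hβ₂ : 0 < β₂) (hε₁ : 0 < ε₁) (hε₂ : 0 < ε₂)
    (hXa : 0 < Xa) (hXb : 0 < Xb)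
    (hV : c₂ - c₁ + β₁ / ε₁ - β₂ * (Xa + ε₂) / (Xa + Xb + ε₂) ^ 2 ≤ 0) :
    isNE β₁ β₂ ε₁ ε₂ c₁ c₂ Xa Xb 0 Xa 0 Xb ↔
      0 ≤ -(c₂ - c₁ + β₁ / ε₁ - β₂ * (Xa + ε₂) / (Xa + Xb + ε₂) ^ 2) +
        (Xb - Xa) * β₂ / (Xa + Xb + ε₂) ^ 2 := by
  have hEq : -(c₂ - c₁ + β₁ / ε₁ - β₂ * (Xa + ε₂) / (Xa + Xb + ε₂) ^ 2) +
        (Xb - Xa) * β₂ / (Xa + Xb + ε₂) ^ 2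
      = c₁ - c₂ - β₁ / ε₁ + β₂ * (Xb + ε₂) / (Xa + Xb + ε₂) ^ 2 := by
    ring
  have hCondB : 0 ≤ c₁ - c₂ - β₁ / ε₁ + β₂ * (Xa + ε₂) / (Xb + Xa + ε₂) ^ 2 := by
    have : (Xb + Xa + ε₂) = (Xa + Xb + ε₂) := by ring
    rw [this]; linarith
  rw [hEq]
  constructor
  · rintro ⟨-, hA, -⟩
    apply cond_of_br β₁ β₂ ε₁ ε₂ c₁ c₂ Xa Xb hβ₁ hβ₂ hε₁ hε₂ hXa hXb
    intro t ht htX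
    exact hA t (Xa - t) ht (by linarith) (by ring)
  · intro hcond
    refine ⟨⟨le_refl 0, hXa.le, by ring, le_refl 0, hXb.le, by ring⟩, ?_, ?_⟩
    · intro y₁ y₂ h1 h2 h3
      have : y₂ = Xa - y₁ := by linarith
      subst this
      exact br_of_cond β₁ β₂ ε₁ ε₂ c₁ c₂ Xa Xb hβ₁ hβ₂ hε₁ hε₂ hXa hXb hcond y₁ h1
        (by linarith)
    · intro y₁ y₂ h1 h2 h3
      have : y₂ = Xb - y₁ := by linarith
      subst this
      exact br_of_cond β₁ β₂ ε₁ ε₂ c₁ c₂ Xb Xa hβ₁ hβ₂ hε₁ hε₂ hXb hXa hCondB y₁ h1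
        (by linarith)
end

section
/- Let β > 0, ε > 0 and consider F : ℝ_{≥0}² → ℝ², F(x_a, x_b) = (β(x_b + ε)/(x_a + x_b + ε)², β(x_a + ε)/(x_a + x_b + ε)²) (the marginal market-share gains of the two players in one region). Then for any two points x = (x_a, x_b) and y = (y_a, y_b) in ℝ_{≥0}² with x ≠ y, the monotonicity inequality ⟨F(x) − F(y), x − y⟩ < 0 holds; i.e., F is strictly monotone (in the operator-theoretic sense) on ℝ_{≥0}². -/
set_option maxHeartbeats 1000000

theorem auxP (xa xb ya yb ε : ℝ) (hxa : 0 ≤ xa) (hxb : 0 ≤ xb) (hya : 0 ≤ ya) (hyb : 0 ≤ yb)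
    (hε : 0 < ε)
    (hsq : 0 < (xa - ya) ^ 2 + (xb - yb) ^ 2) :
    ((xb + ε) * (ya + yb + ε) ^ 2 - (yb + ε) * (xa + xb + ε) ^ 2) * (xa - ya) + ((xa + ε) * (ya + yb + ε) ^ 2 - (ya + ε) * (xa + xb + ε) ^ 2) * (xb - yb) < 0 := by
  have hG : 0 ≤ ((xa - ya)*yb + (xb - yb)*ya + ε*((xa - ya)+(xb - yb)))^2 + ((xa - ya)*xb + (xb - yb)*xa + ε*((xa - ya)+(xb - yb)))^2 - 2*(xa - ya)*(xb - yb)*((xa - ya)+(xb - yb))^2 + 2*xa*xb*((xa - ya)^2 + (xb - yb)^2) + 2*ya*yb*((xa - ya)^2 + (xb - yb)^2) := by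
    rcases le_total ya xa with hu | hu <;> rcases le_total yb xb with hv | hv
    · -- u ≥ 0, v ≥ 0
      have hu' : 0 ≤ xa - ya := by linarith
      have hv' : 0 ≤ xb - yb := by linarith
      have hm : 0 ≤ ((xa - ya)*yb + (xb - yb)*ya + ε*((xa - ya)+(xb - yb))) := by
        have := mul_nonneg hu' hyb
        have := mul_nonneg hv' hya
        have := mul_nonneg hε.le hu'
        have := mul_nonneg hε.le hv'
        nlinarith
      have huv : 0 ≤ (xa - ya)*(xb - yb) := mul_nonneg hu' hv'
      have h1 : 0 ≤ ((xa - ya)*(xb - yb))*((xa - ya)*yb + (xb - yb)*ya + ε*((xa - ya)+(xb - yb))) := mul_nonneg huv hm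
      have h2 : 0 ≤ ((xa - ya)^2 + (xb - yb)^2)*(2*ya*yb + ya*(xb - yb) + yb*(xa - ya)) := by
        apply mul_nonneg hsq.le
        have := mul_nonneg hya hyb
        have := mul_nonneg hya hv'
        have := mul_nonneg hyb hu'
        nlinarith
      have hid : ((xa - ya)*yb + (xb - yb)*ya + ε*((xa - ya)+(xb - yb)))^2 + ((xa - ya)*xb + (xb - yb)*xa + ε*((xa - ya)+(xb - yb)))^2 - 2*(xa - ya)*(xb - yb)*((xa - ya)+(xb - yb))^2 + 2*xa*xb*((xa - ya)^2 + (xb - yb)^2) + 2*ya*yb*((xa - ya)^2 + (xb - yb)^2) = 2*((xa - ya)*yb + (xb - yb)*ya + ε*((xa - ya)+(xb - yb)))^2 + 4*(((xa - ya)*(xb - yb))*((xa - ya)*yb + (xb - yb)*ya + ε*((xa - ya)+(xb - yb)))) + 2*(((xa - ya)^2 + (xb - yb)^2)*(2*ya*yb + ya*(xb - yb) + yb*(xa - ya))) := by ring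
      rw [hid]
      nlinarith [sq_nonneg ((xa - ya)*yb + (xb - yb)*ya + ε*((xa - ya)+(xb - yb)))]
    · -- u ≥ 0, v ≤ 0
      have hu' : 0 ≤ xa - ya := by linarith
      have hv' : 0 ≤ yb - xb := by linarith
      have h1 : 0 ≤ 2*(xa - ya)*(yb-xb)*((xa - ya)+(xb - yb))^2 :=
        mul_nonneg (mul_nonneg (by linarith : (0:ℝ) ≤ 2*(xa - ya)) hv') (sq_nonneg _)
      have h2 : 0 ≤ 2*xa*xb*((xa - ya)^2 + (xb - yb)^2) := by positivity
      have h3 : 0 ≤ 2*ya*yb*((xa - ya)^2 + (xb - yb)^2) := by positivity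
      nlinarith [sq_nonneg ((xa - ya)*yb + (xb - yb)*ya + ε*((xa - ya)+(xb - yb))), sq_nonneg ((xa - ya)*xb + (xb - yb)*xa + ε*((xa - ya)+(xb - yb)))]
    · -- u ≤ 0, v ≥ 0
      have hu' : 0 ≤ ya - xa := by linarith
      have hv' : 0 ≤ xb - yb := by linarith
      have h1 : 0 ≤ 2*(ya-xa)*(xb - yb)*((xa - ya)+(xb - yb))^2 :=
        mul_nonneg (mul_nonneg (by linarith : (0:ℝ) ≤ 2*(ya-xa)) hv') (sq_nonneg _)
      have h2 : 0 ≤ 2*xa*xb*((xa - ya)^2 + (xb - yb)^2) := by positivity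
      have h3 : 0 ≤ 2*ya*yb*((xa - ya)^2 + (xb - yb)^2) := by positivity
      nlinarith [sq_nonneg ((xa - ya)*yb + (xb - yb)*ya + ε*((xa - ya)+(xb - yb))), sq_nonneg ((xa - ya)*xb + (xb - yb)*xa + ε*((xa - ya)+(xb - yb)))]
    · -- u ≤ 0, v ≤ 0
      have hu' : 0 ≤ ya - xa := by linarith
      have hv' : 0 ≤ yb - xb := by linarith
      have hmp : ((xa - ya)*xb + (xb - yb)*xa + ε*((xa - ya)+(xb - yb))) ≤ 0 := by
        have := mul_nonneg hu' hxb
        have := mul_nonneg hv' hxa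
        have := mul_nonneg hε.le hu'
        have := mul_nonneg hε.le hv'
        nlinarith
      have huv : 0 ≤ (xa - ya)*(xb - yb) := by nlinarith [mul_nonneg hu' hv']
      have h1 : 0 ≤ ((xa - ya)*(xb - yb))*(-((xa - ya)*xb + (xb - yb)*xa + ε*((xa - ya)+(xb - yb)))) := mul_nonneg huv (by linarith)
      have h2 : 0 ≤ ((xa - ya)^2 + (xb - yb)^2)*(2*xa*xb + xa*(yb-xb) + xb*(ya-xa)) := by
        apply mul_nonneg hsq.le
        have := mul_nonneg hxa hxb
        have := mul_nonneg hxa hv'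
        have := mul_nonneg hxb hu'
        nlinarith
      have hid : ((xa - ya)*yb + (xb - yb)*ya + ε*((xa - ya)+(xb - yb)))^2 + ((xa - ya)*xb + (xb - yb)*xa + ε*((xa - ya)+(xb - yb)))^2 - 2*(xa - ya)*(xb - yb)*((xa - ya)+(xb - yb))^2 + 2*xa*xb*((xa - ya)^2 + (xb - yb)^2) + 2*ya*yb*((xa - ya)^2 + (xb - yb)^2) = 2*((xa - ya)*xb + (xb - yb)*xa + ε*((xa - ya)+(xb - yb)))^2 + 4*(((xa - ya)*(xb - yb))*(-((xa - ya)*xb + (xb - yb)*xa + ε*((xa - ya)+(xb - yb))))) + 2*(((xa - ya)^2 + (xb - yb)^2)*(2*xa*xb + xa*(yb-xb) + xb*(ya-xa))) := by ring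
      rw [hid]
      nlinarith [sq_nonneg ((xa - ya)*xb + (xb - yb)*xa + ε*((xa - ya)+(xb - yb)))]
  have hid2 : -2 * (((xb + ε) * (ya + yb + ε) ^ 2 - (yb + ε) * (xa + xb + ε) ^ 2) * (xa - ya) + ((xa + ε) * (ya + yb + ε) ^ 2 - (ya + ε) * (xa + xb + ε) ^ 2) * (xb - yb)) = (((xa - ya)*yb + (xb - yb)*ya + ε*((xa - ya)+(xb - yb)))^2 + ((xa - ya)*xb + (xb - yb)*xa + ε*((xa - ya)+(xb - yb)))^2 - 2*(xa - ya)*(xb - yb)*((xa - ya)+(xb - yb))^2 + 2*xa*xb*((xa - ya)^2 + (xb - yb)^2) + 2*ya*yb*((xa - ya)^2 + (xb - yb)^2)) + 2*ε*(xa+xb+ya+yb)*((xa - ya)^2 + (xb - yb)^2) + 2*ε^2*((xa - ya)^2 + (xb - yb)^2) + (xa*(xb - yb) - xb*(xa - ya))^2 + (ya*(xb - yb) - yb*(xa - ya))^2 := by ring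
  have h3 : 0 < 2*ε^2*((xa - ya)^2 + (xb - yb)^2) := by positivity
  have h4 : 0 ≤ 2*ε*(xa+xb+ya+yb)*((xa - ya)^2 + (xb - yb)^2) := by positivity
  nlinarith [sq_nonneg (xa*(xb - yb) - xb*(xa - ya)), sq_nonneg (ya*(xb - yb) - yb*(xa - ya))]

open Set

theorem stmt_17 (β ε : ℝ) (hβ : 0 < β) (hε : 0 < ε)
    (F₁ F₂ : ℝ → ℝ → ℝ)
    (hF₁ : ∀ xa xb, F₁ xa xb = β * (xb + ε) / (xa + xb + ε) ^ 2)
    (hF₂ : ∀ xa xb, F₂ xa xb = β * (xa + ε) / (xa + xb + ε) ^ 2) :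
    ∀ xa xb ya yb : ℝ, 0 ≤ xa → 0 ≤ xb → 0 ≤ ya → 0 ≤ yb →
      (xa, xb) ≠ (ya, yb) →
      (F₁ xa xb - F₁ ya yb) * (xa - ya) + (F₂ xa xb - F₂ ya yb) * (xb - yb) < 0 := by
  intro xa xb ya yb hxa hxb hya hyb hne
  have hs : 0 < xa + xb + ε := by linarith
  have ht : 0 < ya + yb + ε := by linarith
  have hne' : xa ≠ ya ∨ xb ≠ yb := by
    by_contra h
    push_neg at h
    exact hne (by rw [h.1, h.2])
  have hsq : 0 < (xa - ya) ^ 2 + (xb - yb) ^ 2 := by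
    rcases hne' with h | h
    · have h' : xa - ya ≠ 0 := sub_ne_zero.mpr h
      have : 0 < (xa - ya) ^ 2 := by positivity
      nlinarith [sq_nonneg (xb - yb)]
    · have h' : xb - yb ≠ 0 := sub_ne_zero.mpr h
      have : 0 < (xb - yb) ^ 2 := by positivity
      nlinarith [sq_nonneg (xa - ya)]
  have hP := auxP xa xb ya yb ε hxa hxb hya hyb hε hsq
  rw [hF₁, hF₁, hF₂, hF₂]
  have hkey : β * (xb + ε) / (xa + xb + ε) ^ 2 - β * (yb + ε) / (ya + yb + ε) ^ 2
      = β * ((xb + ε) * (ya + yb + ε) ^ 2 - (yb + ε) * (xa + xb + ε) ^ 2) / ((xa + xb + ε) ^ 2 * (ya + yb + ε) ^ 2) := by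
    field_simp
  have hkey2 : β * (xa + ε) / (xa + xb + ε) ^ 2 - β * (ya + ε) / (ya + yb + ε) ^ 2
      = β * ((xa + ε) * (ya + yb + ε) ^ 2 - (ya + ε) * (xa + xb + ε) ^ 2) / ((xa + xb + ε) ^ 2 * (ya + yb + ε) ^ 2) := by
    field_simp
  rw [hkey, hkey2]
  have hre : β * ((xb + ε) * (ya + yb + ε) ^ 2 - (yb + ε) * (xa + xb + ε) ^ 2) / ((xa + xb + ε) ^ 2 * (ya + yb + ε) ^ 2) * (xa - ya)
      + β * ((xa + ε) * (ya + yb + ε) ^ 2 - (ya + ε) * (xa + xb + ε) ^ 2) / ((xa + xb + ε) ^ 2 * (ya + yb + ε) ^ 2) * (xb - yb)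
      = β * (((xb + ε) * (ya + yb + ε) ^ 2 - (yb + ε) * (xa + xb + ε) ^ 2) * (xa - ya) + ((xa + ε) * (ya + yb + ε) ^ 2 - (ya + ε) * (xa + xb + ε) ^ 2) * (xb - yb)) / ((xa + xb + ε) ^ 2 * (ya + yb + ε) ^ 2) := by
    ring
  rw [hre]
  apply div_neg_of_neg_of_pos
  · exact mul_neg_of_pos_of_neg hβ hP
  · positivity
end
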